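/- arXiv:1610.00332 — 7 statements merged into one kernel-verified Lean document; each statement's English description precedes it below -/
import Mathlib

section
/- Let g : (0,∞) → [0,∞) be measurable with ∫₀^∞ g(x) dx < ∞ and ∫₀¹ g(x) dx > 0, and suppose that g(x) = x^{-γ}·L₁(x) for all x > 1, where γ > 1 and L₁ : (0,∞) → ℝ is slowly varying at infinity and bounded away from 0 and ∞ on every interval of the form [1, T]. Then, as h → ∞, ∫₀^∞ g(x)·g(x+h) dx is asymptotically equivalent to (∫₀^∞ g(x) dx) · L₁(h) · h^{-γ}, i.e. the ratio of the two sides tends to 1. Consequently, if additionally 0 < ∫₀^∞ g(x)² dx < ∞, the correlation function ρ_g(h) = (∫₀^∞ g(x)·g(x+h) dx)/(∫₀^∞ g(x)² dx) satisfies ρ_g(h) ~ (∫₀^∞ g(x) dx / ∫₀^∞ g(x)² dx) · L₁(h) · h^{-γ} as h → ∞. -/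
/-!
Put `L x = x ^ γ * g x`, a measurable function agreeing with `L₁` on `(1, ∞)`. For
`k u = log L (e ^ u)` slow variation says `k (u + s) - k u → 0` for each `s`; Karamata's
uniform convergence theorem (a Steinhaus-type measure argument, which is where measurability
enters) makes this uniform in `s ∈ [0, 1]`, and chaining unit steps gives Potter's bound
`L y / L x ≤ e ^ δ (y / x) ^ δ`. Hence `g (x + h) / g h → 1` for each `x > 0` while staying below
`e ^ γ`, so dominated convergence gives `∫ g (x) g (x + h) dx / g h → ∫ g`, and
`g h = L₁ h * h ^ (-γ)`.
-/

open MeasureTheory Set Filter Topology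

def SlowlyVarying (L : ℝ → ℝ) : Prop :=
  ∀ t > (0:ℝ), Tendsto (fun x => L (t * x) / L x) atTop (𝓝 1)

def AddSlowlyVarying (k : ℝ → ℝ) : Prop :=
  ∀ s, Tendsto (fun u => k (u + s) - k u) atTop (𝓝 0)

theorem abs_sub_le_mul_add_one_of_forall_mem_Icc {k : ℝ → ℝ} {U δ : ℝ}
    (h : ∀ u ≥ U, ∀ s ∈ Icc (0:ℝ) 1, |k (u + s) - k u| ≤ δ) {u s : ℝ} (hu : U ≤ u)
    (hs : 0 ≤ s) : |k (u + s) - k u| ≤ δ * (s + 1) := by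
  have hδ : 0 ≤ δ := by simpa using h U le_rfl 0 ⟨le_rfl, zero_le_one⟩
  have hstep : ∀ n : ℕ, ∀ u ≥ U, ∀ s ∈ Icc (0:ℝ) n, |k (u + s) - k u| ≤ δ * n := by
    intro n
    induction n with
    | zero =>
      intro u _ s hs
      simp [le_antisymm (by simpa using hs.2) hs.1]
    | succ n ih =>
      intro u hu s hs
      rcases le_total s 1 with hs₁ | hs₁
      · calc |k (u + s) - k u| ≤ δ := h u hu s ⟨hs.1, hs₁⟩
          _ ≤ δ * (n + 1 : ℕ) := le_mul_of_one_le_right hδ (by simp)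
      · have hrest := ih (u + 1) (by linarith) (s - 1)
          ⟨by linarith, by push_cast at hs; linarith [hs.2]⟩
        rw [show u + 1 + (s - 1) = u + s by ring] at hrest
        have hfirst := h u hu 1 ⟨zero_le_one, le_rfl⟩
        calc |k (u + s) - k u| ≤ |k (u + s) - k (u + 1)| + |k (u + 1) - k u| := abs_sub_le _ _ _
          _ ≤ δ * (n + 1 : ℕ) := by push_cast; linarith
  calc |k (u + s) - k u| ≤ δ * ⌈s⌉₊ := hstep _ u hu s ⟨hs, Nat.le_ceil s⟩
    _ ≤ δ * (s + 1) := mul_le_mul_of_nonneg_left (Nat.ceil_lt_add_one hs).le hδ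

namespace AddSlowlyVarying

variable {k : ℝ → ℝ}

theorem tendsto_volume_setOf_forall_ge (hk : AddSlowlyVarying k) {b : ℕ → ℝ}
    (hb : Tendsto b atTop atTop) (S : Set ℝ) {ε : ℝ} (hε : 0 < ε) :
    Tendsto (fun n => volume {x ∈ S | ∀ m ≥ n, |k (b m + x) - k (b m)| < ε}) atTop
      (𝓝 (volume S)) := by
  have hmono : Monotone fun n => {x ∈ S | ∀ m ≥ n, |k (b m + x) - k (b m)| < ε} :=
    fun n n' hn x hx => ⟨hx.1, fun m hm => hx.2 m (hn.trans hm)⟩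
  have hunion : (⋃ n, {x ∈ S | ∀ m ≥ n, |k (b m + x) - k (b m)| < ε}) = S := by
    refine Subset.antisymm (iUnion_subset fun n x hx => hx.1) fun x hx => ?_
    have hsmall := (Metric.tendsto_nhds.1 ((hk x).comp hb) ε hε)
    obtain ⟨N, hN⟩ := eventually_atTop.1 hsmall
    exact mem_iUnion.2 ⟨N, hx, fun m hm => by simpa [Real.dist_eq] using hN m hm⟩
  have := tendsto_measure_iUnion_atTop (μ := volume) hmono
  rwa [hunion] at this

/-- Karamata's uniform convergence theorem. -/
theorem eventually_forall_mem_Icc_abs_sub_le (hk : AddSlowlyVarying k) (hm : Measurable k)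
    {ε : ℝ} (hε : 0 < ε) : ∀ᶠ u in atTop, ∀ s ∈ Icc (0:ℝ) 1, |k (u + s) - k u| ≤ ε := by
  by_contra hcon
  obtain ⟨u, hu, s, hs, hεs⟩ : ∃ u : ℕ → ℝ, (∀ n : ℕ, (n : ℝ) ≤ u n) ∧ ∃ s : ℕ → ℝ,
      (∀ n, s n ∈ Icc (0:ℝ) 1) ∧ ∀ n, ε < |k (u n + s n) - k (u n)| := by
    simp only [not_eventually, not_forall, not_le, exists_prop] at hcon
    choose u hu s hs hεs using fun n : ℕ => (frequently_atTop.1 hcon (n : ℝ))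
    exact ⟨u, hu, s, hs, hεs⟩
  have hu_top : Tendsto u atTop atTop := tendsto_atTop_mono hu tendsto_natCast_atTop_atTop
  have hus_top : Tendsto (fun n => u n + s n) atTop atTop :=
    tendsto_atTop_mono (fun n => le_add_of_nonneg_right (hs n).1) hu_top
  set A := fun (b : ℕ → ℝ) n => {x ∈ Icc (0:ℝ) 2 | ∀ m ≥ n, |k (b m + x) - k (b m)| < ε / 2}
  have hlarge : ∀ b : ℕ → ℝ, Tendsto b atTop atTop →
      ∀ᶠ n in atTop, ENNReal.ofReal (3 / 2) < volume (A b n) := by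
    intro b hb
    refine (hk.tendsto_volume_setOf_forall_ge hb _ (half_pos hε)).eventually_const_lt ?_
    rw [Real.volume_Icc, ENNReal.ofReal_lt_ofReal_iff (by norm_num)]
    norm_num
  obtain ⟨N, hAN, hBN⟩ := ((hlarge u hu_top).and (hlarge _ hus_top)).exists
  -- shifted by `-s N`, the second set still lies in `[0, 3]`; both have measure `> 3 / 2`,
  -- so they meet
  set B := (fun x => x + -s N) ⁻¹' A (fun n => u n + s n) N
  have hB_meas : MeasurableSet B := by
    refine (measurableSet_Icc.inter ?_).preimage (measurable_add_const _)
    exact measurableSet_setOfPred.2 <| Measurable.forall fun m => Measurable.forall fun _ =>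
      measurableSet_setOfPred.1 <| measurableSet_lt
        ((hm.comp (measurable_const_add _)).sub_const _).abs measurable_const
  obtain ⟨x, hxA, hxB⟩ : (A u N ∩ B).Nonempty := by
    refine nonempty_inter_of_measure_lt_add volume hB_meas (u := Icc 0 3) ?_ ?_ ?_
    · exact fun x hx => ⟨hx.1.1, by linarith [hx.1.2]⟩
    · exact fun x hx => ⟨by linarith [hx.1.1, (hs N).1], by linarith [hx.1.2, (hs N).2]⟩
    · rw [measure_preimage_add_right, Real.volume_Icc]
      calc ENNReal.ofReal (3 - 0) = ENNReal.ofReal (3 / 2) + ENNReal.ofReal (3 / 2) := by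
            rw [← ENNReal.ofReal_add] <;> norm_num
        _ < volume (A u N) + volume (A (fun n => u n + s n) N) := ENNReal.add_lt_add hAN hBN
  have h₁ : |k (u N + x) - k (u N)| < ε / 2 := hxA.2 N le_rfl
  have h₂ : |k (u N + s N) - k (u N + x)| < ε / 2 := by
    have := hxB.2 N le_rfl
    rwa [abs_sub_comm, show u N + s N + (x + -s N) = u N + x by ring] at this
  linarith [hεs N, abs_sub_le (k (u N + s N)) (k (u N + x)) (k (u N))]

theorem tendsto_sub_of_tendsto (hk : AddSlowlyVarying k) (hm : Measurable k) {ι : Type*}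
    {l : Filter ι} {u s : ι → ℝ} (hu : Tendsto u l atTop) (hs : Tendsto s l (𝓝 0))
    (hs₀ : ∀ᶠ i in l, 0 ≤ s i) : Tendsto (fun i => k (u i + s i) - k (u i)) l (𝓝 0) := by
  refine Metric.tendsto_nhds.2 fun ε hε => ?_
  have hs₁ : ∀ᶠ i in l, s i ≤ 1 := hs.eventually (ge_mem_nhds one_pos)
  filter_upwards [hu.eventually (hk.eventually_forall_mem_Icc_abs_sub_le hm (half_pos hε)),
    hs₀, hs₁] with i hi hi₀ hi₁
  rw [Real.dist_eq, sub_zero]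
  exact (hi (s i) ⟨hi₀, hi₁⟩).trans_lt (half_lt_self hε)

theorem eventually_abs_sub_le (hk : AddSlowlyVarying k) (hm : Measurable k)
    {δ : ℝ} (hδ : 0 < δ) : ∀ᶠ u in atTop, ∀ s ≥ 0, |k (u + s) - k u| ≤ δ * (s + 1) := by
  obtain ⟨U, hU⟩ := eventually_atTop.1 (hk.eventually_forall_mem_Icc_abs_sub_le hm hδ)
  exact eventually_atTop.2 ⟨U, fun u hu s hs => abs_sub_le_mul_add_one_of_forall_mem_Icc hU hu hs⟩

end AddSlowlyVarying

section

open Real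

theorem exp_sub_log_comp_exp {L : ℝ → ℝ} {x y : ℝ} (hx : 0 < x) (hy : 0 < y) (hLx : 0 < L x)
    (hLy : 0 < L y) :
    exp (log (L (exp (log y))) - log (L (exp (log x)))) = L y / L x := by
  rw [exp_log hx, exp_log hy, exp_sub, exp_log hLx, exp_log hLy]

namespace SlowlyVarying

variable {L : ℝ → ℝ}

theorem congr' (hL : SlowlyVarying L) {L' : ℝ → ℝ} (h : L =ᶠ[atTop] L') : SlowlyVarying L' :=
  fun t ht => (hL t ht).congr' <| by
    filter_upwards [(tendsto_id.const_mul_atTop ht).eventually h, h] with x htx hx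
    simp only [id] at htx
    rw [htx, hx]

theorem addSlowlyVarying_log_comp_exp (hL : SlowlyVarying L) (hpos : ∀ᶠ x in atTop, 0 < L x) :
    AddSlowlyVarying fun u => log (L (exp u)) := by
  intro s
  have hratio := (hL (exp s) (exp_pos s)).comp tendsto_exp_atTop
  have hlog := ((continuousAt_log one_ne_zero).tendsto.comp hratio)
  rw [log_one] at hlog
  refine hlog.congr' ?_
  filter_upwards [tendsto_exp_atTop.eventually hpos,
    (tendsto_exp_atTop.comp (tendsto_atTop_add_const_right _ s tendsto_id)).eventually hpos]
    with u hu hus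
  simp only [Function.comp_apply, id] at hu hus ⊢
  rw [← exp_add, add_comm s u, log_div hus.ne' hu.ne']

theorem tendsto_div_of_tendsto (hL : SlowlyVarying L) (hm : Measurable L)
    (hpos : ∀ᶠ x in atTop, 0 < L x) {ι : Type*} {l : Filter ι} {x y : ι → ℝ}
    (hx : Tendsto x l atTop) (hxy : ∀ᶠ i in l, x i ≤ y i)
    (hyx : Tendsto (fun i => y i / x i) l (𝓝 1)) :
    Tendsto (fun i => L (y i) / L (x i)) l (𝓝 1) := by
  have hk := hL.addSlowlyVarying_log_comp_exp hpos
  have hk_meas : Measurable fun u => log (L (exp u)) :=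
    measurable_log.comp (hm.comp measurable_exp)
  have hx₀ : ∀ᶠ i in l, 0 < x i := hx.eventually_gt_atTop 0
  have hs : Tendsto (fun i => log (y i / x i)) l (𝓝 0) := by
    have := (continuousAt_log one_ne_zero).tendsto.comp hyx
    rwa [log_one] at this
  have hs₀ : ∀ᶠ i in l, 0 ≤ log (y i / x i) := by
    filter_upwards [hx₀, hxy] with i hi hiy
    exact log_nonneg ((one_le_div hi).2 hiy)
  have hexp := (continuous_exp.tendsto 0).comp
    (hk.tendsto_sub_of_tendsto hk_meas (tendsto_log_atTop.comp hx) hs hs₀)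
  rw [exp_zero] at hexp
  refine hexp.congr' ?_
  filter_upwards [hx₀, hxy, hx.eventually hpos, hx.eventually (eventually_forall_ge_atTop.2 hpos)]
    with i hi hiy hLx hLy
  have hy : 0 < y i := hi.trans_le hiy
  simp only [Function.comp_apply]
  rw [← log_mul hi.ne' (div_pos hy hi).ne', mul_div_cancel₀ _ hi.ne',
    exp_sub_log_comp_exp hi hy hLx (hLy _ hiy)]

/-- Potter's bound. -/
theorem eventually_div_le (hL : SlowlyVarying L) (hm : Measurable L)
    (hpos : ∀ᶠ x in atTop, 0 < L x) {δ : ℝ} (hδ : 0 < δ) :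
    ∀ᶠ x in atTop, ∀ y ≥ x, L y / L x ≤ exp δ * (y / x) ^ δ := by
  have hk := hL.addSlowlyVarying_log_comp_exp hpos
  have hk_meas : Measurable fun u => log (L (exp u)) :=
    measurable_log.comp (hm.comp measurable_exp)
  filter_upwards [tendsto_log_atTop.eventually (hk.eventually_abs_sub_le hk_meas hδ),
    eventually_forall_ge_atTop.2 hpos, eventually_gt_atTop 0] with x hpot hLpos hx y hxy
  have hy : 0 < y := hx.trans_le hxy
  have hs : 0 ≤ log y - log x := sub_nonneg.2 (log_le_log hx hxy)
  have hbound := (abs_le.1 (hpot _ hs)).2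
  rw [add_sub_cancel] at hbound
  calc L y / L x = exp (log (L (exp (log y))) - log (L (exp (log x)))) :=
        (exp_sub_log_comp_exp hx hy (hLpos x le_rfl) (hLpos y hxy)).symm
    _ ≤ exp (δ * (log y - log x + 1)) := exp_le_exp.2 hbound
    _ = exp δ * (y / x) ^ δ := by
      rw [rpow_def_of_pos (div_pos hy hx), log_div hy.ne' hx.ne', ← exp_add]
      ring_nf

end SlowlyVarying

end

section RegularVariation

open Real

variable {g L : ℝ → ℝ} {γ : ℝ}

theorem div_eq_rpow_neg_mul_div_of_eq {x y : ℝ} (hx : 0 < x) (hy : 0 < y)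
    (hgx : g x = x ^ (-γ) * L x) (hgy : g y = y ^ (-γ) * L y) :
    g y / g x = (y / x) ^ (-γ) * (L y / L x) := by
  rw [hgx, hgy, div_rpow hy.le hx.le, mul_div_mul_comm]

theorem SlowlyVarying.tendsto_add_div_of_eventually_eq (hL : SlowlyVarying L) (hm : Measurable L)
    (hpos : ∀ᶠ x in atTop, 0 < L x) (hg : ∀ᶠ x in atTop, g x = x ^ (-γ) * L x) {a : ℝ}
    (ha : 0 ≤ a) : Tendsto (fun h => g (a + h) / g h) atTop (𝓝 1) := by
  have hratio : Tendsto (fun h => (a + h) / h) atTop (𝓝 1) := by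
    have := (tendsto_const_nhds (x := a)).div_atTop tendsto_id |>.add_const 1
    rw [zero_add] at this
    refine this.congr' ?_
    filter_upwards [eventually_ne_atTop 0] with h hh
    rw [id, add_div, div_self hh]
  have hL_ratio : Tendsto (fun h => L (a + h) / L h) atTop (𝓝 1) :=
    hL.tendsto_div_of_tendsto hm hpos tendsto_id
      (Eventually.of_forall fun h => le_add_of_nonneg_left ha) hratio
  have hpow : Tendsto (fun h => ((a + h) / h) ^ (-γ)) atTop (𝓝 1) := by
    simpa using hratio.rpow_const (Or.inl one_ne_zero) (p := -γ)
  simpa using (hpow.mul hL_ratio).congr' <| by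
    filter_upwards [eventually_gt_atTop 0, eventually_forall_ge_atTop.2 hg] with h hh hgh
    exact (div_eq_rpow_neg_mul_div_of_eq hh (by linarith) (hgh h le_rfl)
      (hgh _ (le_add_of_nonneg_left ha))).symm

theorem SlowlyVarying.eventually_abs_add_div_le_of_eventually_eq (hL : SlowlyVarying L)
    (hm : Measurable L) (hpos : ∀ᶠ x in atTop, 0 < L x) (hg : ∀ᶠ x in atTop, g x = x ^ (-γ) * L x)
    (hγ : 0 < γ) : ∀ᶠ h in atTop, ∀ a ≥ 0, |g (a + h) / g h| ≤ exp γ := by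
  filter_upwards [hL.eventually_div_le hm hpos hγ, eventually_forall_ge_atTop.2 hg,
    eventually_forall_ge_atTop.2 hpos, eventually_gt_atTop 0] with h hpot hgh hLpos hh a ha
  have hah : h ≤ a + h := le_add_of_nonneg_left ha
  have hr : 0 < (a + h) / h := div_pos (by linarith) hh
  rw [div_eq_rpow_neg_mul_div_of_eq hh (by linarith) (hgh h le_rfl) (hgh _ hah),
    abs_of_nonneg (mul_nonneg (rpow_nonneg hr.le _) (div_pos (hLpos _ hah) (hLpos h le_rfl)).le)]
  calc ((a + h) / h) ^ (-γ) * (L (a + h) / L h)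
      ≤ ((a + h) / h) ^ (-γ) * (exp γ * ((a + h) / h) ^ γ) :=
        mul_le_mul_of_nonneg_left (hpot _ hah) (rpow_nonneg hr.le _)
    _ = exp γ := by
      rw [rpow_neg hr.le, mul_left_comm, inv_mul_cancel₀ (rpow_pos_of_pos hr γ).ne', mul_one]

end RegularVariation

theorem tendsto_setIntegral_mul_shift_div {g : ℝ → ℝ} {C : ℝ} (hm : Measurable g)
    (hi : IntegrableOn g (Ioi 0)) (hlim : ∀ x > 0, Tendsto (fun h => g (x + h) / g h) atTop (𝓝 1))
    (hbd : ∀ᶠ h in atTop, ∀ x > 0, |g (x + h) / g h| ≤ C) :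
    Tendsto (fun h => ∫ x in Ioi 0, g x * (g (x + h) / g h)) atTop (𝓝 (∫ x in Ioi 0, g x)) := by
  refine tendsto_integral_filter_of_dominated_convergence (fun x => |g x| * C)
    (Eventually.of_forall fun h => ?_) ?_ (hi.norm.mul_const C) ?_
  · exact (hm.mul ((hm.comp (measurable_add_const h)).div_const _)).aestronglyMeasurable
  · filter_upwards [hbd] with h hh
    refine (ae_restrict_iff' measurableSet_Ioi).2 (Eventually.of_forall fun x hx => ?_)
    rw [Real.norm_eq_abs, abs_mul]
    exact mul_le_mul_of_nonneg_left (hh x hx) (abs_nonneg _)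
  · refine (ae_restrict_iff' measurableSet_Ioi).2 (Eventually.of_forall fun x hx => ?_)
    simpa using (hlim x hx).const_mul (g x)

/-- Proposition (long-run asymptotics, case γ > 1): if `g(x) = x^(-γ) L₁(x)` for `x > 1` with
`L₁` slowly varying at infinity, then `∫₀^∞ g(x) g(x+h) dx ~ (∫₀^∞ g) · L₁(h) · h^(-γ)` as
`h → ∞`; consequently the BSS autocorrelation `ρ_g(h) ~ (∫g/∫g²) · L₁(h) · h^(-γ)`. -/
theorem bss_acf_long_time_asymptotics_integrable_kernel
    (γ : ℝ) (hγ : 1 < γ)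
    (g L₁ : ℝ → ℝ)
    (hg_meas : Measurable g)
    (hg_nonneg : ∀ x ∈ Ioi (0:ℝ), 0 ≤ g x)
    (hg_int : IntegrableOn g (Ioi 0))
    (hg_pos : 0 < ∫ x in Ioc (0:ℝ) 1, g x)
    (hform : ∀ x > (1:ℝ), g x = x ^ (-γ) * L₁ x)
    (hL₁_slow : ∀ t > (0:ℝ), Tendsto (fun x => L₁ (t * x) / L₁ x) atTop (nhds 1))
    (hL₁_bdd : ∀ T ≥ (1:ℝ), ∃ c Cu : ℝ, 0 < c ∧ ∀ x ∈ Icc (1:ℝ) T, c ≤ L₁ x ∧ L₁ x ≤ Cu) :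
    Tendsto
      (fun h => (∫ x in Ioi (0:ℝ), g x * g (x + h)) /
        ((∫ x in Ioi (0:ℝ), g x) * L₁ h * h ^ (-γ))) atTop (nhds 1)
    ∧ (IntegrableOn (fun x => (g x) ^ 2) (Ioi 0) →
        0 < ∫ x in Ioi (0:ℝ), (g x) ^ 2 →
        Tendsto
          (fun h => ((∫ x in Ioi (0:ℝ), g x * g (x + h)) / ∫ x in Ioi (0:ℝ), (g x) ^ 2) /
            (((∫ x in Ioi (0:ℝ), g x) / ∫ x in Ioi (0:ℝ), (g x) ^ 2) * L₁ h * h ^ (-γ)))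
          atTop (nhds 1)) := by
  set L : ℝ → ℝ := fun x => x ^ γ * g x
  have hLL₁ : ∀ x > 1, L x = L₁ x := fun x hx => by
    show x ^ γ * g x = L₁ x
    rw [hform x hx, ← mul_assoc, ← Real.rpow_add (by linarith), add_neg_cancel,
      Real.rpow_zero, one_mul]
  have hL : SlowlyVarying L :=
    SlowlyVarying.congr' hL₁_slow ((eventually_gt_atTop 1).mono fun x hx => (hLL₁ x hx).symm)
  have hL_meas : Measurable L := (measurable_id.pow_const γ).mul hg_meas
  have hL_pos : ∀ᶠ x in atTop, 0 < L x := (eventually_gt_atTop 1).mono fun x hx => by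
    obtain ⟨c, _, hc, hb⟩ := hL₁_bdd x hx.le
    exact hLL₁ x hx ▸ hc.trans_le (hb x ⟨hx.le, le_rfl⟩).1
  have hg_eq : ∀ᶠ x in atTop, g x = x ^ (-γ) * L x :=
    (eventually_gt_atTop 1).mono fun x hx => by rw [hLL₁ x hx, hform x hx]
  have hlim := tendsto_setIntegral_mul_shift_div hg_meas hg_int
    (fun x hx => hL.tendsto_add_div_of_eventually_eq hL_meas hL_pos hg_eq hx.le)
    ((hL.eventually_abs_add_div_le_of_eventually_eq hL_meas hL_pos hg_eq (by linarith)).mono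
      fun h hh x hx => hh x hx.le)
  have hI : 0 < ∫ x in Ioi 0, g x := hg_pos.trans_le <| setIntegral_mono_set hg_int
    ((ae_restrict_iff' measurableSet_Ioi).2 (ae_of_all _ hg_nonneg))
    Ioc_subset_Ioi_self.eventuallyLE
  have hacf : Tendsto (fun h => (∫ x in Ioi (0:ℝ), g x * g (x + h)) /
      ((∫ x in Ioi (0:ℝ), g x) * L₁ h * h ^ (-γ))) atTop (nhds 1) := by
    have := hlim.div_const (∫ x in Ioi 0, g x)
    rw [div_self hI.ne'] at this
    refine this.congr' <| (eventually_gt_atTop 1).mono fun h hh => ?_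
    simp_rw [← mul_div_assoc]
    rw [integral_div, div_div, mul_assoc _ (L₁ h), mul_comm (L₁ h), ← hform h hh, mul_comm (g h)]
  refine ⟨hacf, fun _ hS => hacf.congr fun h => ?_⟩
  rw [div_mul_eq_mul_div, div_mul_eq_mul_div, div_div_div_cancel_right₀ hS.ne']
end

section
/- Let α ∈ (-1/2, 1/2) and λ > 0, and let g be the gamma kernel g(x) = x^α·e^{-λx} for x > 0. Then, as h → ∞, the autocovariance integral ∫₀^∞ g(x)·g(x+h) dx = ∫₀^∞ x^α·(x+h)^α·e^{-λ(2x+h)} dx is asymptotically equivalent to Γ(α+1)·(2λ)^{-(α+1)} · e^{-λh} · h^{α}, i.e. the ratio of the two sides tends to 1; in particular the autocorrelation of the Gamma-BSS model decays exponentially fast (short memory). -/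
open MeasureTheory Set Filter

/-!
Writing `(x + h)^α = h^α (1 + x/h)^α` pulls the factor `e^{-λh} h^α` out of the integral and
leaves `∫₀^∞ x^α (1 + x/h)^α e^{-2λx} dx`. For `h ≥ 1` and `α ≤ 1` its integrand is dominated by
the integrable `x^α (1 + x) e^{-2λx}`, so by dominated convergence it tends to
`∫₀^∞ x^α e^{-2λx} dx = Γ(α+1) (2λ)^{-(α+1)}`.
-/

lemma integrableOn_rpow_mul_exp_neg_mul {s b : ℝ} (hs : -1 < s) (hb : 0 < b) :
    IntegrableOn (fun x : ℝ => x ^ s * Real.exp (-b * x)) (Ioi 0) := by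
  simpa [Real.rpow_one] using integrableOn_rpow_mul_exp_neg_mul_rpow (p := 1) hs one_pos hb

lemma integral_Ioi_rpow_mul_exp_neg_mul {s b : ℝ} (hs : -1 < s) (hb : 0 < b) :
    ∫ x in Ioi (0:ℝ), x ^ s * Real.exp (-b * x) = Real.Gamma (s + 1) * b ^ (-(s + 1)) := by
  have key := Real.integral_rpow_mul_exp_neg_mul_Ioi (a := s + 1) (by linarith) hb
  simp only [add_sub_cancel_right, ← neg_mul] at key
  rw [key, one_div, Real.inv_rpow hb.le, ← Real.rpow_neg hb.le, mul_comm]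

lemma add_rpow_eq_rpow_mul_one_add_div_rpow {x h : ℝ} (s : ℝ) (hx : 0 ≤ x) (hh : 0 < h) :
    (x + h) ^ s = h ^ s * (1 + x / h) ^ s := by
  rw [← Real.mul_rpow hh.le (by positivity), mul_add, mul_div_cancel₀ _ hh.ne', mul_one, add_comm]

lemma one_add_div_rpow_le_one_add {x h s : ℝ} (hx : 0 ≤ x) (hh : 1 ≤ h) (hs : s ≤ 1) :
    (1 + x / h) ^ s ≤ 1 + x := calc
  (1 + x / h) ^ s ≤ (1 + x / h) ^ (1:ℝ) :=
    Real.rpow_le_rpow_of_exponent_le (le_add_of_nonneg_right (by positivity)) hs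
  _ = 1 + x / h := Real.rpow_one _
  _ ≤ 1 + x := by gcongr; exact div_le_self hx hh

lemma tendsto_integral_rpow_mul_one_add_div_rpow_mul_exp {s b : ℝ} (hs₀ : -1 < s)
    (hs₁ : s ≤ 1) (hb : 0 < b) :
    Tendsto (fun h => ∫ x in Ioi (0:ℝ), x ^ s * (1 + x / h) ^ s * Real.exp (-b * x)) atTop
      (nhds (∫ x in Ioi (0:ℝ), x ^ s * Real.exp (-b * x))) := by
  refine tendsto_integral_filter_of_dominated_convergence
    (fun x => x ^ s * Real.exp (-b * x) + x ^ (s + 1) * Real.exp (-b * x)) ?_ ?_ ?_ ?_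
  · exact Eventually.of_forall fun h => by fun_prop
  · filter_upwards [eventually_ge_atTop (1:ℝ)] with h hh
    filter_upwards [self_mem_ae_restrict measurableSet_Ioi] with x (hx : 0 < x)
    rw [Real.norm_of_nonneg (by positivity), Real.rpow_add_one hx.ne']
    calc x ^ s * (1 + x / h) ^ s * Real.exp (-b * x)
        ≤ x ^ s * (1 + x) * Real.exp (-b * x) := by
          gcongr; exact one_add_div_rpow_le_one_add hx.le hh hs₁
      _ = _ := by ring
  · exact (integrableOn_rpow_mul_exp_neg_mul hs₀ hb).add
      (integrableOn_rpow_mul_exp_neg_mul (by linarith) hb)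
  · refine Eventually.of_forall fun x => ?_
    have : Tendsto (fun h : ℝ => (1 + x / h) ^ s) atTop (nhds 1) := by
      simpa using ((tendsto_const_nhds.div_atTop tendsto_id).const_add 1).rpow_const
        (p := s) (Or.inl (by norm_num))
    simpa using (this.const_mul (x ^ s)).mul_const (Real.exp (-b * x))

lemma gammaKernel_mul_shift (α lam x h : ℝ) :
    (x ^ α * Real.exp (-lam * x)) * ((x + h) ^ α * Real.exp (-lam * (x + h)))
      = x ^ α * (x + h) ^ α * Real.exp (-lam * (2 * x + h)) := by
  rw [show -lam * (2 * x + h) = -lam * x + -lam * (x + h) by ring, Real.exp_add]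
  ring

lemma integral_gammaKernel_mul_shift {α lam h : ℝ} (hh : 0 < h) :
    ∫ x in Ioi (0:ℝ), (x ^ α * Real.exp (-lam * x)) * ((x + h) ^ α * Real.exp (-lam * (x + h)))
      = Real.exp (-lam * h) * h ^ α *
          ∫ x in Ioi (0:ℝ), x ^ α * (1 + x / h) ^ α * Real.exp (-(2 * lam) * x) := by
  rw [← integral_const_mul]
  refine setIntegral_congr_fun measurableSet_Ioi fun x (hx : 0 < x) => ?_
  rw [gammaKernel_mul_shift, add_rpow_eq_rpow_mul_one_add_div_rpow α hx.le hh,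
    show -lam * (2 * x + h) = -lam * h + -(2 * lam) * x by ring, Real.exp_add]
  ring

/-- Gamma kernel: for `g(x) = x^α e^(-λx)`, the autocovariance integral satisfies
`∫₀^∞ g(x) g(x+h) dx = ∫₀^∞ x^α (x+h)^α e^(-λ(2x+h)) dx
  ~ Γ(α+1) (2λ)^(-(α+1)) e^(-λh) h^α` as `h → ∞` (short memory). -/
theorem gamma_bss_acf_asymptotics
    (α lam : ℝ) (hα : α ∈ Ioo (-(1:ℝ)/2) (1/2)) (hlam : 0 < lam) :
    (∀ h : ℝ,
      (∫ x in Ioi (0:ℝ),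
          (x ^ α * Real.exp (-lam * x)) * ((x + h) ^ α * Real.exp (-lam * (x + h))))
        = ∫ x in Ioi (0:ℝ), x ^ α * (x + h) ^ α * Real.exp (-lam * (2 * x + h)))
    ∧ Tendsto
        (fun h =>
          (∫ x in Ioi (0:ℝ),
              (x ^ α * Real.exp (-lam * x)) * ((x + h) ^ α * Real.exp (-lam * (x + h)))) /
            (Real.Gamma (α + 1) * (2 * lam) ^ (-(α + 1)) * Real.exp (-lam * h) * h ^ α))
        atTop (nhds 1) := by
  obtain ⟨hα₀, hα₁⟩ := hα
  refine ⟨fun h => integral_congr_ae (ae_of_all _ fun x => gammaKernel_mul_shift α lam x h), ?_⟩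
  have h2lam : 0 < 2 * lam := by positivity
  have hC : Real.Gamma (α + 1) * (2 * lam) ^ (-(α + 1)) ≠ 0 := by
    have := Real.Gamma_pos_of_pos (show 0 < α + 1 by linarith)
    positivity
  have hJ := (tendsto_integral_rpow_mul_one_add_div_rpow_mul_exp (by linarith) (by linarith)
    h2lam).div_const (Real.Gamma (α + 1) * (2 * lam) ^ (-(α + 1)))
  rw [integral_Ioi_rpow_mul_exp_neg_mul (by linarith) h2lam, div_self hC] at hJ
  refine hJ.congr' ?_
  filter_upwards [eventually_gt_atTop 0] with h hh
  have hscale : Real.exp (-lam * h) * h ^ α ≠ 0 := by positivity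
  rw [integral_gammaKernel_mul_shift hh, mul_assoc _ (Real.exp _), mul_comm _ (Real.exp _ * _),
    mul_div_mul_left _ _ hscale]
end

section
/- Let α ∈ (-1/2, 1/2) and γ > 1, and let g be the power law kernel g(x) = x^α·(1+x)^{-γ-α} for x > 0. Then, as h → ∞, ∫₀^∞ g(x)·g(x+h) dx is asymptotically equivalent to (∫₀^∞ x^α·(1+x)^{-γ-α} dx) · h^{-γ}, i.e. the ratio of the two sides tends to 1; so the autocorrelation of the Power-BSS model decays like h^{-γ}. -/
/-!
Write `g(x) = x^(-γ) L(x)` with `L(x) = (x/(1+x))^(γ+α) ∈ (0, 1]` and `L(x) → 1`. Then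
`h^γ g(x+h) → 1` for each fixed `x`, while `h^γ g(x+h) ≤ h^γ (x+h)^(-γ) ≤ 1`; since `g` is
integrable for `γ > 1`, dominated convergence gives
`h^γ ∫₀^∞ g(x) g(x+h) dx → ∫₀^∞ g`.
-/

open MeasureTheory Set Filter Topology

lemma tendsto_div_add_const_atTop (c : ℝ) :
    Tendsto (fun y : ℝ => y / (y + c)) atTop (𝓝 1) := by
  have hlim : Tendsto (fun y : ℝ => (1 + c * y⁻¹)⁻¹) atTop (𝓝 1) := by
    simpa using ((tendsto_inv_atTop_zero.const_mul c).const_add 1).inv₀ (by simp)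
  refine hlim.congr' ?_
  filter_upwards [eventually_gt_atTop (max 0 (-c))] with y hy
  have hy0 : 0 < y := (le_max_left _ _).trans_lt hy
  have hyc : y + c ≠ 0 := by linarith [le_max_right 0 (-c)]
  field_simp

lemma Filter.Tendsto.comp_add_mul_rpow {k : ℝ → ℝ} {γ : ℝ}
    (hk_lim : Tendsto (fun y => k y * y ^ γ) atTop (𝓝 1)) (x : ℝ) :
    Tendsto (fun h => k (x + h) * h ^ γ) atTop (𝓝 1) := by
  have hratio : Tendsto (fun h : ℝ => (h / (h + x)) ^ γ) atTop (𝓝 1) := by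
    simpa using (tendsto_div_add_const_atTop x).rpow_const (p := γ) (.inl one_ne_zero)
  have hcomp := (hk_lim.comp (tendsto_atTop_add_const_left atTop x tendsto_id)).mul hratio
  rw [one_mul] at hcomp
  refine hcomp.congr' ?_
  filter_upwards [eventually_gt_atTop (max 0 (-x))] with h hh
  have hh0 : 0 < h := (le_max_left _ _).trans_lt hh
  have hxh : 0 < x + h := by linarith [le_max_right 0 (-x)]
  simp only [Function.comp, id]
  rw [Real.div_rpow hh0.le (by linarith), add_comm h x, mul_assoc,
    mul_div_cancel₀ _ (Real.rpow_pos_of_pos hxh γ).ne']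

theorem tendsto_setIntegral_mul_comp_add_mul_rpow {f k : ℝ → ℝ} {γ C : ℝ}
    (hf : IntegrableOn f (Ioi 0)) (hk : Measurable k) (hγ : 0 ≤ γ)
    (hk_le : ∀ y, 0 < y → |k y| ≤ C * y ^ (-γ))
    (hk_lim : Tendsto (fun y => k y * y ^ γ) atTop (𝓝 1)) :
    Tendsto (fun h => ∫ x in Ioi 0, f x * k (x + h) * h ^ γ) atTop
      (𝓝 (∫ x in Ioi 0, f x)) := by
  have hC : 0 ≤ C := by
    have := (abs_nonneg _).trans (hk_le 1 one_pos)
    rwa [Real.one_rpow, mul_one] at this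
  refine tendsto_integral_filter_of_dominated_convergence (fun x => C * ‖f x‖) ?_ ?_
    (hf.norm.const_mul C) ?_
  · exact .of_forall fun h => (hf.aestronglyMeasurable.mul
      (hk.comp (measurable_add_const h)).aestronglyMeasurable).mul_const _
  · filter_upwards [eventually_gt_atTop 0] with h hh
    refine (ae_restrict_iff' measurableSet_Ioi).2 (.of_forall fun x (hx : 0 < x) => ?_)
    have hkh : |k (x + h)| * h ^ γ ≤ C :=
      calc |k (x + h)| * h ^ γ ≤ C * (x + h) ^ (-γ) * h ^ γ := by
            gcongr; exact hk_le (x + h) (by linarith)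
        _ ≤ C * h ^ (-γ) * h ^ γ := by
            have hdecay : (x + h) ^ (-γ) ≤ h ^ (-γ) :=
              Real.rpow_le_rpow_of_nonpos hh (by linarith) (neg_nonpos.2 hγ)
            gcongr
        _ = C := by rw [mul_assoc, ← Real.rpow_add hh, neg_add_cancel, Real.rpow_zero, mul_one]
    rw [norm_mul, norm_mul, Real.norm_of_nonneg (Real.rpow_nonneg hh.le _), Real.norm_eq_abs (k _),
      mul_assoc, mul_comm C]
    exact mul_le_mul_of_nonneg_left hkh (norm_nonneg _)
  · refine (ae_restrict_iff' measurableSet_Ioi).2 (.of_forall fun x _ => ?_)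
    simpa [mul_assoc] using (hk_lim.comp_add_mul_rpow x).const_mul (f x)

noncomputable def powerLawKernel (α γ x : ℝ) : ℝ := x ^ α * (1 + x) ^ (-γ - α)

section powerLawKernel

variable {α γ : ℝ}

lemma powerLawKernel_nonneg {x : ℝ} (hx : 0 ≤ x) : 0 ≤ powerLawKernel α γ x :=
  mul_nonneg (Real.rpow_nonneg hx _) (Real.rpow_nonneg (by linarith) _)

lemma powerLawKernel_pos {x : ℝ} (hx : 0 < x) : 0 < powerLawKernel α γ x :=
  mul_pos (Real.rpow_pos_of_pos hx _) (Real.rpow_pos_of_pos (by linarith) _)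

lemma measurable_powerLawKernel : Measurable (powerLawKernel α γ) := by
  unfold powerLawKernel; fun_prop

lemma powerLawKernel_eq_rpow_neg_mul {x : ℝ} (hx : 0 < x) :
    powerLawKernel α γ x = x ^ (-γ) * (x / (1 + x)) ^ (γ + α) := by
  have h1x : 0 < 1 + x := by linarith
  rw [powerLawKernel, Real.div_rpow hx.le h1x.le, mul_div_assoc', ← Real.rpow_add hx,
    div_eq_mul_inv, ← Real.rpow_neg h1x.le]
  ring_nf

lemma powerLawKernel_le_rpow_neg (hαγ : 0 ≤ γ + α) {x : ℝ} (hx : 0 < x) :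
    powerLawKernel α γ x ≤ x ^ (-γ) := by
  have hratio : x / (1 + x) ≤ 1 := (div_le_one (by linarith)).2 (by linarith)
  rw [powerLawKernel_eq_rpow_neg_mul hx]
  exact mul_le_of_le_one_right (Real.rpow_nonneg hx.le _)
    (Real.rpow_le_one (by positivity) hratio hαγ)

lemma powerLawKernel_le_rpow (hαγ : 0 ≤ γ + α) {x : ℝ} (hx : 0 ≤ x) :
    powerLawKernel α γ x ≤ x ^ α :=
  mul_le_of_le_one_right (Real.rpow_nonneg hx _)
    (Real.rpow_le_one_of_one_le_of_nonpos (by linarith) (by linarith))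

lemma tendsto_powerLawKernel_mul_rpow :
    Tendsto (fun x => powerLawKernel α γ x * x ^ γ) atTop (𝓝 1) := by
  have hlim := (tendsto_div_add_const_atTop 1).rpow_const (p := γ + α) (.inl one_ne_zero)
  rw [Real.one_rpow] at hlim
  refine hlim.congr' ?_
  filter_upwards [eventually_gt_atTop 0] with x hx
  rw [powerLawKernel_eq_rpow_neg_mul hx, mul_right_comm, ← Real.rpow_add hx, neg_add_cancel,
    Real.rpow_zero, one_mul, add_comm 1 x]

lemma integrableOn_powerLawKernel (hα : -1 < α) (hγ : 1 < γ) :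
    IntegrableOn (powerLawKernel α γ) (Ioi 0) := by
  have hαγ : 0 ≤ γ + α := by linarith
  have hnear : IntegrableOn (powerLawKernel α γ) (Ioc 0 1) := by
    refine (intervalIntegral.intervalIntegrable_rpow' hα).1.mono'
      measurable_powerLawKernel.aestronglyMeasurable
      ((ae_restrict_iff' measurableSet_Ioc).2 (.of_forall ?_))
    intro x hx
    rw [Real.norm_of_nonneg (powerLawKernel_nonneg hx.1.le)]
    exact powerLawKernel_le_rpow hαγ hx.1.le
  have hfar : IntegrableOn (powerLawKernel α γ) (Ioi 1) := by
    refine (integrableOn_Ioi_rpow_of_lt (a := -γ) (by linarith) one_pos).mono'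
      measurable_powerLawKernel.aestronglyMeasurable
      ((ae_restrict_iff' measurableSet_Ioi).2 (.of_forall ?_))
    intro x (hx : 1 < x)
    rw [Real.norm_of_nonneg (powerLawKernel_nonneg (by linarith))]
    exact powerLawKernel_le_rpow_neg hαγ (by linarith)
  simpa [Ioc_union_Ioi_eq_Ioi zero_le_one] using hnear.union hfar

lemma integral_powerLawKernel_pos (hα : -1 < α) (hγ : 1 < γ) :
    0 < ∫ x in Ioi 0, powerLawKernel α γ x := by
  rw [setIntegral_pos_iff_support_of_nonneg_ae
    ((ae_restrict_iff' measurableSet_Ioi).2 (.of_forall fun _ hx => powerLawKernel_nonneg hx.le))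
    (integrableOn_powerLawKernel hα hγ)]
  have hsupp : Function.support (powerLawKernel α γ) ∩ Ioi 0 = Ioi 0 :=
    inter_eq_right.2 fun x hx => (powerLawKernel_pos hx).ne'
  simp [hsupp]

end powerLawKernel

/-- Power law kernel, case γ > 1: for `g(x) = x^α (1+x)^(-γ-α)`,
`∫₀^∞ g(x) g(x+h) dx ~ (∫₀^∞ g(x) dx) · h^(-γ)` as `h → ∞`. -/
theorem power_bss_acf_asymptotics_integrable
    (α γ : ℝ) (hα : α ∈ Ioo (-(1:ℝ)/2) (1/2)) (hγ : 1 < γ) :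
    Tendsto
      (fun h =>
        (∫ x in Ioi (0:ℝ),
            (x ^ α * (1 + x) ^ (-γ - α)) * ((x + h) ^ α * (1 + (x + h)) ^ (-γ - α))) /
          ((∫ x in Ioi (0:ℝ), x ^ α * (1 + x) ^ (-γ - α)) * h ^ (-γ)))
      atTop (nhds 1) := by
  change Tendsto (fun h => (∫ x in Ioi 0, powerLawKernel α γ x * powerLawKernel α γ (x + h)) /
    ((∫ x in Ioi 0, powerLawKernel α γ x) * h ^ (-γ))) atTop (𝓝 1)
  have hα' : -1 < α := by linarith [hα.1]
  set C := ∫ x in Ioi 0, powerLawKernel α γ x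
  have hbound : ∀ y, 0 < y → |powerLawKernel α γ y| ≤ 1 * y ^ (-γ) := fun y hy => by
    rw [abs_of_nonneg (powerLawKernel_nonneg hy.le), one_mul]
    exact powerLawKernel_le_rpow_neg (by linarith) hy
  have hacf : Tendsto
      (fun h => ∫ x in Ioi 0, powerLawKernel α γ x * powerLawKernel α γ (x + h) * h ^ γ)
      atTop (𝓝 C) :=
    tendsto_setIntegral_mul_comp_add_mul_rpow (integrableOn_powerLawKernel hα' hγ)
      measurable_powerLawKernel (by linarith) hbound tendsto_powerLawKernel_mul_rpow
  have hratio := hacf.div_const C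
  rw [div_self (integral_powerLawKernel_pos hα' hγ).ne'] at hratio
  refine hratio.congr' ?_
  filter_upwards [eventually_gt_atTop 0] with h hh
  rw [integral_mul_const, Real.rpow_neg hh.le, div_mul_eq_div_div, div_inv_eq_mul,
    div_mul_eq_mul_div]
end

section
/- Let α ∈ (-1/2, 1/2) and γ ∈ (1/2, 1), and let g be the power law kernel g(x) = x^α·(1+x)^{-γ-α} for x > 0. Then, as h → ∞, ∫₀^∞ g(x)·g(x+h) dx is asymptotically equivalent to (∫₀^∞ y^{-γ}(1+y)^{-γ} dy) · h^{1−2γ}, i.e. the ratio of the two sides tends to 1; in particular the autocorrelation of the Power-BSS model is not integrable (long memory). -/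
/-!
Write `g(x) = x^(-γ) L(x)` with `L(x) = (x/(1+x))^(γ+α)`, so that `0 ≤ L ≤ 1` and `L → 1`.
The substitution `x = h y` gives
`∫₀^∞ g(x) g(x+h) dx = h^(1-2γ) ∫₀^∞ φ(y) L(hy) L(h(1+y)) dy` with
`φ(y) = y^(-γ) (1+y)^(-γ)`, which is integrable exactly because `1/2 < γ < 1`.
Dominated convergence (with dominant `φ`) sends the last integral to `∫₀^∞ φ > 0`.
Since `1 - 2γ > -1`, a function equivalent to a multiple of `h^(1-2γ)` is not integrable
at infinity.
-/

open MeasureTheory Set Filter Asymptotics Topology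

theorem setIntegral_Ioi_pos {f : ℝ → ℝ} {a : ℝ} (hf : IntegrableOn f (Ioi a))
    (hpos : ∀ x ∈ Ioi a, 0 < f x) : 0 < ∫ x in Ioi a, f x := by
  have hnonneg : 0 ≤ᵐ[volume.restrict (Ioi a)] f := by
    filter_upwards [ae_restrict_mem measurableSet_Ioi] with x hx
    exact (hpos x hx).le
  rw [setIntegral_pos_iff_support_of_nonneg_ae hnonneg hf]
  calc (0 : ENNReal) < volume (Ioi a) := by simp
    _ ≤ volume (Function.support f ∩ Ioi a) :=
      measure_mono fun x hx => ⟨(hpos x hx).ne', hx⟩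

theorem integrableOn_Ioi_rpow_mul_one_add_rpow {a b : ℝ} (ha : a < 1) (hab : 1 < a + b) :
    IntegrableOn (fun y : ℝ => y ^ (-a) * (1 + y) ^ (-b)) (Ioi 0) := by
  have hmeas : Measurable fun y : ℝ => y ^ (-a) * (1 + y) ^ (-b) := by fun_prop
  rw [← Ioc_union_Ioi_eq_Ioi zero_le_one]
  refine IntegrableOn.union ?_ ?_
  · have hdom : IntegrableOn (fun y : ℝ => y ^ (-a)) (Ioc 0 1) := by
      rw [← intervalIntegrable_iff_integrableOn_Ioc_of_le zero_le_one]
      exact intervalIntegral.intervalIntegrable_rpow' (by linarith)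
    refine hdom.mono' hmeas.aestronglyMeasurable ?_
    filter_upwards [ae_restrict_mem measurableSet_Ioc] with y hy
    have hy₀ : 0 < y := hy.1
    rw [Real.norm_of_nonneg (by positivity)]
    exact mul_le_of_le_one_right (by positivity)
      (Real.rpow_le_one_of_one_le_of_nonpos (by linarith) (by linarith))
  · have hdom : IntegrableOn (fun y : ℝ => y ^ (-a) * y ^ (-b)) (Ioi 1) := by
      refine (integrableOn_Ioi_rpow_of_lt (a := -(a + b)) (by linarith) one_pos).congr_fun
        (fun y (hy : 1 < y) => ?_) measurableSet_Ioi
      rw [← Real.rpow_add (by linarith), neg_add]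
    refine hdom.mono' hmeas.aestronglyMeasurable ?_
    filter_upwards [ae_restrict_mem measurableSet_Ioi] with y (hy : 1 < y)
    rw [Real.norm_of_nonneg (by positivity)]
    exact mul_le_mul_of_nonneg_left
      (Real.rpow_le_rpow_of_nonpos (by linarith) (by linarith) (by linarith)) (by positivity)

theorem setIntegral_Ioi_rpow_mul_one_add_rpow_pos {a b : ℝ} (ha : a < 1) (hab : 1 < a + b) :
    0 < ∫ y in Ioi (0:ℝ), y ^ (-a) * (1 + y) ^ (-b) :=
  setIntegral_Ioi_pos (integrableOn_Ioi_rpow_mul_one_add_rpow ha hab)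
    fun y (hy : 0 < y) => by positivity

theorem tendsto_setIntegral_mul_comp_mul {φ ρ : ℝ → ℝ} (hφ : IntegrableOn φ (Ioi 0))
    (hρ : Measurable ρ)
    (hρ_le : ∀ x, 0 < x → ‖ρ x‖ ≤ 1) (hρ_lim : Tendsto ρ atTop (𝓝 1)) :
    Tendsto (fun h => ∫ y in Ioi 0, φ y * (ρ (h * y) * ρ (h * (1 + y)))) atTop
      (𝓝 (∫ y in Ioi 0, φ y)) := by
  refine tendsto_integral_filter_of_dominated_convergence (fun y => ‖φ y‖) ?_ ?_ hφ.norm ?_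
  · exact Eventually.of_forall fun h => hφ.aestronglyMeasurable.mul
      ((hρ.comp (measurable_const_mul h)).mul
        (hρ.comp ((measurable_const_add 1).const_mul h))).aestronglyMeasurable
  · filter_upwards [eventually_gt_atTop 0] with h hh
    filter_upwards [ae_restrict_mem measurableSet_Ioi] with y (hy : 0 < y)
    rw [norm_mul, norm_mul]
    exact mul_le_of_le_one_right (norm_nonneg _) (mul_le_one₀ (hρ_le _ (by positivity))
      (norm_nonneg _) (hρ_le _ (by positivity)))
  · filter_upwards [ae_restrict_mem measurableSet_Ioi] with y (hy : 0 < y)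
    have hρy := hρ_lim.comp (tendsto_id.atTop_mul_const hy)
    have hρy' := hρ_lim.comp (tendsto_id.atTop_mul_const (by positivity : 0 < 1 + y))
    simpa using tendsto_const_nhds.mul (hρy.mul hρy')

theorem not_integrableOn_Ioi_of_isEquivalent_rpow {f : ℝ → ℝ} {a c p : ℝ} (hc : c ≠ 0)
    (hp : -1 ≤ p) (hf : f ~[atTop] fun x => c * x ^ p) : ¬ IntegrableOn f (Ioi a) := by
  intro hint
  have hbigO : (fun x : ℝ => x ^ p) =O[atTop] f :=
    (isBigO_self_const_mul hc _ _).trans hf.isBigO_symm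
  have hmeas : Measurable fun x : ℝ => x ^ p := by fun_prop
  have hrpow : IntegrableAtFilter (fun x : ℝ => x ^ p) atTop :=
    hbigO.integrableAtFilter hmeas.stronglyMeasurable.stronglyMeasurableAtFilter
      ⟨Ioi a, Ioi_mem_atTop a, hint⟩
  exact hp.not_gt (integrableAtFilter_rpow_atTop_iff.mp hrpow)

noncomputable section

def powerKernel (α γ x : ℝ) : ℝ := x ^ α * (1 + x) ^ (-γ - α)

def powerAcf (α γ h : ℝ) : ℝ :=
  ∫ x in Ioi 0, powerKernel α γ x * powerKernel α γ (x + h)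

def powerKernelCorrection (s x : ℝ) : ℝ := (x / (1 + x)) ^ s

end

section PowerKernel

variable {α γ s : ℝ}

theorem powerKernel_eq_rpow_mul_correction {x : ℝ} (hx : 0 < x) :
    powerKernel α γ x = x ^ (-γ) * powerKernelCorrection (γ + α) x := by
  have hx₁ : 0 < 1 + x := by linarith
  rw [powerKernel, powerKernelCorrection, Real.div_rpow hx.le hx₁.le, mul_div_assoc',
    ← Real.rpow_add hx, eq_div_iff (Real.rpow_pos_of_pos hx₁ _).ne', mul_assoc,
    ← Real.rpow_add hx₁]
  ring_nf
  rw [Real.rpow_zero, mul_one]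

theorem measurable_powerKernelCorrection : Measurable (powerKernelCorrection s) := by
  unfold powerKernelCorrection
  fun_prop

theorem norm_powerKernelCorrection_le_one (hs : 0 ≤ s) {x : ℝ} (hx : 0 < x) :
    ‖powerKernelCorrection s x‖ ≤ 1 := by
  have hx₁ : x / (1 + x) ≤ 1 := by rw [div_le_one (by linarith)]; linarith
  rw [powerKernelCorrection, Real.norm_of_nonneg (Real.rpow_nonneg (by positivity) _)]
  exact Real.rpow_le_one (by positivity) hx₁ hs

theorem tendsto_powerKernelCorrection_atTop :
    Tendsto (powerKernelCorrection s) atTop (𝓝 1) := by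
  have hdiv : Tendsto (fun x : ℝ => x / (1 + x)) atTop (𝓝 1) := by
    have hinv : Tendsto (fun x : ℝ => (1 + x)⁻¹) atTop (𝓝 0) :=
      (tendsto_atTop_add_const_left atTop 1 tendsto_id).inv_tendsto_atTop
    refine (by simpa using tendsto_const_nhds.sub hinv : Tendsto _ _ (𝓝 (1:ℝ))).congr' ?_
    filter_upwards [eventually_gt_atTop 0] with x hx
    field_simp
    ring
  show Tendsto (fun x : ℝ => (x / (1 + x)) ^ s) atTop (𝓝 1)
  simpa using hdiv.rpow_const (Or.inl one_ne_zero)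

theorem powerAcf_eq_rpow_mul_integral {h : ℝ} (hh : 0 < h) :
    powerAcf α γ h = h ^ (1 - 2 * γ) * ∫ y in Ioi 0, y ^ (-γ) * (1 + y) ^ (-γ) *
      (powerKernelCorrection (γ + α) (h * y) *
        powerKernelCorrection (γ + α) (h * (1 + y))) := by
  have hscaled : ∀ y ∈ Ioi (0:ℝ),
      powerKernel α γ (h * y) * powerKernel α γ (h * y + h) = h ^ (-2 * γ) * (y ^ (-γ) *
        (1 + y) ^ (-γ) * (powerKernelCorrection (γ + α) (h * y) *
          powerKernelCorrection (γ + α) (h * (1 + y)))) := by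
    intro y (hy : 0 < y)
    rw [show h * y + h = h * (1 + y) by ring,
      powerKernel_eq_rpow_mul_correction (by positivity),
      powerKernel_eq_rpow_mul_correction (by positivity),
      Real.mul_rpow hh.le hy.le, Real.mul_rpow hh.le (by positivity),
      show -2 * γ = -γ + -γ by ring, Real.rpow_add hh]
    ring
  have hsubst := integral_comp_mul_left_Ioi'
    (fun x => powerKernel α γ x * powerKernel α γ (x + h)) 0 hh
  rw [mul_zero, smul_eq_mul] at hsubst
  rw [powerAcf, ← hsubst, setIntegral_congr_fun measurableSet_Ioi hscaled, integral_const_mul,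
    ← mul_assoc, show 1 - 2 * γ = 1 + -2 * γ by ring, Real.rpow_add hh, Real.rpow_one]

theorem isEquivalent_powerAcf (hγα : 0 ≤ γ + α) (hγ₁ : 1 / 2 < γ) (hγ₂ : γ < 1) :
    powerAcf α γ ~[atTop]
      fun h => (∫ y in Ioi 0, y ^ (-γ) * (1 + y) ^ (-γ)) * h ^ (1 - 2 * γ) := by
  have hφ := integrableOn_Ioi_rpow_mul_one_add_rpow (a := γ) (b := γ) hγ₂ (by linarith)
  have hC := setIntegral_Ioi_rpow_mul_one_add_rpow_pos hγ₂ (b := γ) (by linarith)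
  have hlim := tendsto_setIntegral_mul_comp_mul hφ measurable_powerKernelCorrection
    (fun _ => norm_powerKernelCorrection_le_one hγα) tendsto_powerKernelCorrection_atTop
  rw [← isEquivalent_const_iff_tendsto hC.ne'] at hlim
  refine (hlim.mul (IsEquivalent.refl (u := fun h : ℝ => h ^ (1 - 2 * γ)))).congr_left ?_
  filter_upwards [eventually_gt_atTop 0] with h hh
  rw [Pi.mul_apply, mul_comm, powerAcf_eq_rpow_mul_integral hh]

end PowerKernel

/-- Power law kernel, case γ ∈ (1/2,1): for `g(x) = x^α (1+x)^(-γ-α)`,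
`∫₀^∞ g(x) g(x+h) dx ~ (∫₀^∞ y^(-γ)(1+y)^(-γ) dy) · h^(1-2γ)` as `h → ∞`;
in particular the autocovariance is not integrable (long memory). -/
theorem power_bss_acf_asymptotics_long_memory
    (α γ : ℝ) (hα : α ∈ Ioo (-(1:ℝ)/2) (1/2)) (hγ : γ ∈ Ioo (1/2 : ℝ) 1) :
    Tendsto
      (fun h =>
        (∫ x in Ioi (0:ℝ),
            (x ^ α * (1 + x) ^ (-γ - α)) * ((x + h) ^ α * (1 + (x + h)) ^ (-γ - α))) /
          ((∫ y in Ioi (0:ℝ), y ^ (-γ) * (1 + y) ^ (-γ)) * h ^ (1 - 2 * γ)))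
      atTop (nhds 1)
    ∧ ¬ IntegrableOn
        (fun h => ∫ x in Ioi (0:ℝ),
          (x ^ α * (1 + x) ^ (-γ - α)) * ((x + h) ^ α * (1 + (x + h)) ^ (-γ - α)))
        (Ioi 0) := by
  obtain ⟨hα, -⟩ := hα
  obtain ⟨hγ₁, hγ₂⟩ := hγ
  have hequiv := isEquivalent_powerAcf (α := α) (by linarith) hγ₁ hγ₂
  have hC := setIntegral_Ioi_rpow_mul_one_add_rpow_pos hγ₂ (b := γ) (by linarith)
  refine ⟨(isEquivalent_iff_tendsto_one ?_).mp hequiv,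
    not_integrableOn_Ioi_of_isEquivalent_rpow hC.ne' (by linarith) hequiv⟩
  filter_upwards [eventually_gt_atTop 0] with h hh
  exact mul_ne_zero hC.ne' (Real.rpow_pos_of_pos hh _).ne'
end

section
/- Let γ₀ > 0, α ∈ (-1/2, 1/2), c > 0, and let L₀ : (0,∞) → ℝ be slowly varying at zero. Let ρ_X : ℝ → ℝ satisfy 1 − ρ_X(h) ~ c·h^{2α+1}·L₀(h) as h ↓ 0 (in particular ρ_X(h) → 1 and ρ_X(h) ≠ 1 for all sufficiently small h > 0). Define ρ(h) = (exp(γ₀·ρ_X(h)) − 1)/(exp(γ₀) − 1); this is the autocorrelation function of the lognormal process σ_t = ξ·exp(X_t) when X is a stationary zero-mean Gaussian process with variance γ₀ and autocorrelation ρ_X. Then, as h ↓ 0, 1 − ρ(h) is asymptotically equivalent to [γ₀·e^{γ₀}/(e^{γ₀} − 1)] · c · h^{2α+1} · L₀(h); in particular the exponentiated (raw volatility) process inherits the roughness index α of the log volatility process. -/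
/-!
Since `1 - (e^{γr} - 1)/(e^γ - 1) = e^γ/(e^γ - 1) · (1 - e^{-γ(1-r)})` and `1 - e^{-u} ~ u` as
`u → 0`, substituting `u = γ₀(1 - ρ_X(h)) → 0` gives `1 - ρ(h) ~ γ₀e^{γ₀}/(e^{γ₀} - 1) · (1 - ρ_X(h))`;
the roughness asymptotics of `1 - ρ_X` then transfer verbatim.
-/

open Set Filter Asymptotics Real Topology

theorem isEquivalent_one_sub_exp_neg : (fun t : ℝ => 1 - exp (-t)) ~[𝓝 0] id := by
  have h : HasDerivAt (fun t : ℝ => 1 - exp (-t)) 1 0 := by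
    simpa using ((hasDerivAt_neg (0:ℝ)).exp).const_sub 1
  simpa using! h.isLittleO

theorem one_sub_exp_mul_sub_one_div_eq {γ : ℝ} (hγ : γ ≠ 0) (r : ℝ) :
    1 - (exp (γ * r) - 1) / (exp γ - 1) = exp γ / (exp γ - 1) * (1 - exp (-(γ * (1 - r)))) := by
  have hE : exp γ - 1 ≠ 0 := sub_ne_zero.mpr (by simpa using hγ)
  rw [show -(γ * (1 - r)) = γ * r - γ by ring, exp_sub]
  field_simp
  ring

theorem isEquivalent_one_sub_exp_mul_sub_one_div {α : Type*} {l : Filter α} {ρ g : α → ℝ}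
    {γ : ℝ} (hγ : γ ≠ 0) (hρ : Tendsto ρ l (𝓝 1)) (hg : (fun x => 1 - ρ x) ~[l] g) :
    (fun x => 1 - (exp (γ * ρ x) - 1) / (exp γ - 1)) ~[l]
      fun x => γ * exp γ / (exp γ - 1) * g x := by
  have hu : Tendsto (fun x => γ * (1 - ρ x)) l (𝓝 0) := by
    simpa using ((tendsto_const_nhds (x := (1:ℝ))).sub hρ).const_mul γ
  have h := (IsEquivalent.refl (u := fun _ => exp γ / (exp γ - 1))).mul
    ((isEquivalent_one_sub_exp_neg.comp_tendsto hu).trans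
      ((IsEquivalent.refl (u := fun _ => γ)).mul hg))
  refine (h.congr_left ?_).congr_right ?_
  · exact .of_eq (funext fun x => (one_sub_exp_mul_sub_one_div_eq hγ (ρ x)).symm)
  · exact .of_eq (funext fun x => by simp only [Pi.mul_apply]; ring)

theorem lognormal_inherits_roughness_general
    (γ₀ α c : ℝ) (hγ₀ : 0 < γ₀)
    (L₀ ρX : ℝ → ℝ)
    (hrough : Tendsto (fun h => (1 - ρX h) / (c * h ^ (2 * α + 1) * L₀ h))
      (nhdsWithin 0 (Ioi 0)) (nhds 1))
    (hlim : Tendsto ρX (nhdsWithin 0 (Ioi 0)) (nhds 1)) :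
    Tendsto
      (fun h => (1 - (Real.exp (γ₀ * ρX h) - 1) / (Real.exp γ₀ - 1)) /
        ((γ₀ * Real.exp γ₀ / (Real.exp γ₀ - 1)) * c * h ^ (2 * α + 1) * L₀ h))
      (nhdsWithin 0 (Ioi 0)) (nhds 1) := by
  have hκ : γ₀ * exp γ₀ / (exp γ₀ - 1) ≠ 0 :=
    div_ne_zero (mul_ne_zero hγ₀.ne' (exp_pos γ₀).ne') (by linarith [one_lt_exp_iff.mpr hγ₀])
  have hequiv := isEquivalent_one_sub_exp_mul_sub_one_div hγ₀.ne' hlim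
    (isEquivalent_of_tendsto_one hrough)
  refine (isEquivalent_iff_tendsto_one ?_).mp (hequiv.congr_right (.of_eq (funext fun h => by ring)))
  filter_upwards [hrough.eventually_ne one_ne_zero] with h hratio
  have hg : c * h ^ (2 * α + 1) * L₀ h ≠ 0 := fun h0 => hratio (by rw [h0, div_zero])
  simpa only [mul_assoc] using mul_ne_zero hκ hg

/-- Theorem 2(i): the exponentiated (raw volatility) process inherits the roughness index of the
log volatility process. If `1 - ρ_X(h) ~ c h^(2α+1) L₀(h)` as `h ↓ 0`, then the lognormal
autocorrelation `ρ(h) = (exp(γ₀ ρ_X(h)) - 1)/(exp(γ₀) - 1)` satisfies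
`1 - ρ(h) ~ (γ₀ e^γ₀/(e^γ₀ - 1)) c h^(2α+1) L₀(h)` as `h ↓ 0`. -/
theorem lognormal_inherits_roughness
    (γ₀ α c : ℝ) (hγ₀ : 0 < γ₀) (hα : α ∈ Ioo (-(1:ℝ)/2) (1/2)) (hc : 0 < c)
    (L₀ ρX : ℝ → ℝ)
    (hL₀_slow : ∀ t > (0:ℝ),
      Tendsto (fun x => L₀ (t * x) / L₀ x) (nhdsWithin 0 (Ioi 0)) (nhds 1))
    (hrough : Tendsto (fun h => (1 - ρX h) / (c * h ^ (2 * α + 1) * L₀ h))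
      (nhdsWithin 0 (Ioi 0)) (nhds 1))
    (hlim : Tendsto ρX (nhdsWithin 0 (Ioi 0)) (nhds 1))
    (hne : ∀ᶠ h in nhdsWithin 0 (Ioi 0), ρX h ≠ 1) :
    Tendsto
      (fun h => (1 - (Real.exp (γ₀ * ρX h) - 1) / (Real.exp γ₀ - 1)) /
        ((γ₀ * Real.exp γ₀ / (Real.exp γ₀ - 1)) * c * h ^ (2 * α + 1) * L₀ h))
      (nhdsWithin 0 (Ioi 0)) (nhds 1) :=
  lognormal_inherits_roughness_general γ₀ α c hγ₀ L₀ ρX hrough hlim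
end

section
/- Let Δ > 0, let a, a′ ∈ ℝ, c, c′ > 0, and α, α′ ∈ (-1/2, 1/2). If a + c·(kΔ)^{2α+1} = a′ + c′·(kΔ)^{2α′+1} holds for k = 1, 2, 3, then a = a′, c = c′, and α = α′. Consequently, for any bandwidth m ≥ 3 the population NLLS criterion Q(a, c, α) = Σ_{k=1}^m (a₀ + c₀·(kΔ)^{2α₀+1} − a − c·(kΔ)^{2α+1})², with c₀ > 0 and α₀ ∈ (-1/2, 1/2), has (a₀, c₀, α₀) as its unique zero, hence its unique minimizer, among parameters with c > 0. -/
/-!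
Write `β = 2α + 1 > 0`. If the exponents differ, `t ↦ c t^β - c' t^γ` takes the same value at
`Δ, 2Δ, 3Δ`, so by Rolle its derivative vanishes at two distinct points; but that derivative
vanishes exactly where `c β t^(β-γ) = c' γ`, and `t ↦ t^(β-γ)` is injective on `(0, ∞)`.
With equal exponents, two points already force `c = c'` and then `a = a'`. The NLLS criterion
is a sum of squares that vanishes only if the residuals at `k = 1, 2, 3` vanish.
-/

open Set

theorem exists_two_hasDerivAt_eq_zero {f f' : ℝ → ℝ} {x y z : ℝ} (hxy : x < y) (hyz : y < z)
    (hf : ∀ t ∈ Icc x z, HasDerivAt f (f' t) t) (hfxy : f x = f y) (hfyz : f y = f z) :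
    ∃ s t, x < s ∧ s < t ∧ f' s = 0 ∧ f' t = 0 := by
  have hcont : ContinuousOn f (Icc x z) := fun t ht => (hf t ht).continuousAt.continuousWithinAt
  obtain ⟨s, hs, hs'⟩ := exists_hasDerivAt_eq_zero hxy
    (hcont.mono (Icc_subset_Icc_right hyz.le)) hfxy
    (fun t ht => hf t ⟨ht.1.le, ht.2.le.trans hyz.le⟩)
  obtain ⟨t, ht, ht'⟩ := exists_hasDerivAt_eq_zero hyz
    (hcont.mono (Icc_subset_Icc_left hxy.le)) hfyz
    (fun t ht => hf t ⟨hxy.le.trans ht.1.le, ht.2.le⟩)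
  exact ⟨s, t, hs.1, hs.2.trans ht.1, hs', ht'⟩

theorem mul_mul_rpow_eq_of_mul_mul_rpow_sub_one_eq {c c' β γ t : ℝ} (ht : 0 < t)
    (h : c * β * t ^ (β - 1) = c' * γ * t ^ (γ - 1)) : c * β * t ^ (β - γ) = c' * γ := by
  have hpos : 0 < t ^ (γ - 1) := Real.rpow_pos_of_pos ht _
  calc c * β * t ^ (β - γ) = c * β * t ^ (β - 1) / t ^ (γ - 1) := by
        rw [show β - γ = (β - 1) - (γ - 1) by ring, Real.rpow_sub ht, mul_div_assoc]
    _ = c' * γ := by rw [h, mul_div_assoc, div_self hpos.ne', mul_one]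

/-- The derivative of `t ↦ c t^β - c' t^γ` has at most one zero on `(0, ∞)` when `β ≠ γ`. -/
theorem eq_of_mul_mul_rpow_sub_one_eq {c c' β γ s t : ℝ} (hc : c ≠ 0) (hβ : β ≠ 0)
    (hβγ : β ≠ γ) (hs : 0 < s) (ht : 0 < t)
    (hs' : c * β * s ^ (β - 1) = c' * γ * s ^ (γ - 1))
    (ht' : c * β * t ^ (β - 1) = c' * γ * t ^ (γ - 1)) : s = t := by
  have hpow : s ^ (β - γ) = t ^ (β - γ) := by
    refine mul_left_cancel₀ (mul_ne_zero hc hβ) ?_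
    rw [mul_mul_rpow_eq_of_mul_mul_rpow_sub_one_eq hs hs',
      mul_mul_rpow_eq_of_mul_mul_rpow_sub_one_eq ht ht']
  exact (Real.rpow_left_inj hs.le ht.le (sub_ne_zero.mpr hβγ)).mp hpow

theorem eq_of_add_mul_rpow_eq_of_three_points {a a' c c' β γ x y z : ℝ} (hc : c ≠ 0)
    (hβ : β ≠ 0) (hx : 0 < x) (hxy : x < y) (hyz : y < z)
    (hx' : a + c * x ^ β = a' + c' * x ^ γ) (hy' : a + c * y ^ β = a' + c' * y ^ γ)
    (hz' : a + c * z ^ β = a' + c' * z ^ γ) :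
    a = a' ∧ c = c' ∧ β = γ := by
  have hβγ : β = γ := by
    by_contra hβγ
    have hderiv : ∀ t ∈ Icc x z, HasDerivAt (fun t => c * t ^ β - c' * t ^ γ)
        (c * (β * t ^ (β - 1)) - c' * (γ * t ^ (γ - 1))) t := fun t ht =>
      have ht₀ : t ≠ 0 := (hx.trans_le ht.1).ne'
      ((Real.hasDerivAt_rpow_const (Or.inl ht₀)).const_mul c).sub
        ((Real.hasDerivAt_rpow_const (Or.inl ht₀)).const_mul c')
    obtain ⟨s, t, hxs, hst, hs, ht⟩ := exists_two_hasDerivAt_eq_zero hxy hyz hderiv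
      (by linarith) (by linarith)
    have hs₀ : 0 < s := hx.trans hxs
    exact hst.ne (eq_of_mul_mul_rpow_sub_one_eq (c' := c') hc hβ hβγ hs₀ (hs₀.trans hst)
      (by linear_combination hs) (by linear_combination ht))
  subst hβγ
  have hxy_pow : x ^ β ≠ y ^ β := fun h =>
    hxy.ne ((Real.rpow_left_inj hx.le (hx.trans hxy).le hβ).mp h)
  have hcc : c = c' := by
    have : (c - c') * (x ^ β - y ^ β) = 0 := by linear_combination hx' - hy'
    exact sub_eq_zero.mp ((mul_eq_zero.mp this).resolve_right (sub_ne_zero.mpr hxy_pow))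
  subst hcc
  exact ⟨by linarith, rfl, rfl⟩

theorem eq_of_add_mul_rpow_eq_on_grid {Δ a a' c c' β γ : ℝ} (hΔ : 0 < Δ) (hc : c ≠ 0)
    (hβ : β ≠ 0) (h : ∀ k : ℕ, 1 ≤ k → k ≤ 3 →
      a + c * ((k : ℝ) * Δ) ^ β = a' + c' * ((k : ℝ) * Δ) ^ γ) :
    a = a' ∧ c = c' ∧ β = γ := by
  have h₁ := h 1 le_rfl (by norm_num)
  have h₂ := h 2 (by norm_num) (by norm_num)
  have h₃ := h 3 (by norm_num) le_rfl
  push_cast at h₁ h₂ h₃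
  rw [one_mul] at h₁
  exact eq_of_add_mul_rpow_eq_of_three_points hc hβ hΔ (by linarith) (by linarith) h₁ h₂ h₃

/-- Identification for the NLLS criterion: if `a + c (kΔ)^(2α+1) = a' + c' (kΔ)^(2α'+1)` for
`k = 1, 2, 3`, then `(a, c, α) = (a', c', α')`. Consequently, for any bandwidth `m ≥ 3` the
population NLLS criterion `Q(a,c,α) = Σ_{k=1}^m (a₀ + c₀ (kΔ)^(2α₀+1) - a - c (kΔ)^(2α+1))²`
has `(a₀, c₀, α₀)` as its unique zero, hence unique minimizer, among parameters with `c > 0`. -/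
theorem nlls_identification
    (Δ : ℝ) (hΔ : 0 < Δ) :
    (∀ a a' c c' α α' : ℝ, 0 < c → 0 < c' →
      α ∈ Ioo (-(1:ℝ)/2) (1/2) → α' ∈ Ioo (-(1:ℝ)/2) (1/2) →
      (∀ k : ℕ, 1 ≤ k → k ≤ 3 →
        a + c * ((k : ℝ) * Δ) ^ (2 * α + 1) = a' + c' * ((k : ℝ) * Δ) ^ (2 * α' + 1)) →
      a = a' ∧ c = c' ∧ α = α') ∧
    (∀ m : ℕ, 3 ≤ m → ∀ a₀ c₀ α₀ : ℝ, 0 < c₀ → α₀ ∈ Ioo (-(1:ℝ)/2) (1/2) →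
      (∑ k ∈ Finset.Icc 1 m,
          (a₀ + c₀ * ((k : ℝ) * Δ) ^ (2 * α₀ + 1)
            - a₀ - c₀ * ((k : ℝ) * Δ) ^ (2 * α₀ + 1)) ^ 2) = 0 ∧
      ∀ a c α : ℝ, 0 < c → α ∈ Ioo (-(1:ℝ)/2) (1/2) → (a, c, α) ≠ (a₀, c₀, α₀) →
        0 < ∑ k ∈ Finset.Icc 1 m,
          (a₀ + c₀ * ((k : ℝ) * Δ) ^ (2 * α₀ + 1)
            - a - c * ((k : ℝ) * Δ) ^ (2 * α + 1)) ^ 2) := by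
  have identification : ∀ a a' c c' α α' : ℝ, 0 < c → α ∈ Ioo (-(1:ℝ)/2) (1/2) →
      (∀ k : ℕ, 1 ≤ k → k ≤ 3 →
        a + c * ((k : ℝ) * Δ) ^ (2 * α + 1) = a' + c' * ((k : ℝ) * Δ) ^ (2 * α' + 1)) →
      a = a' ∧ c = c' ∧ α = α' := fun a a' c c' α α' hc hα heq =>
    have ⟨ha, hc', hβ⟩ := eq_of_add_mul_rpow_eq_on_grid hΔ hc.ne' (by linarith [hα.1]) heq
    ⟨ha, hc', by linarith⟩
  refine ⟨fun a a' c c' α α' hc _ hα _ => identification a a' c c' α α' hc hα, ?_⟩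
  intro m hm a₀ c₀ α₀ hc₀ hα₀
  refine ⟨Finset.sum_eq_zero fun k _ => by ring, fun a c α _ _ hne => ?_⟩
  obtain ⟨k, ⟨hk₁, hk₃⟩, hk⟩ : ∃ k : ℕ, (1 ≤ k ∧ k ≤ 3) ∧
      a₀ + c₀ * ((k : ℝ) * Δ) ^ (2 * α₀ + 1) ≠ a + c * ((k : ℝ) * Δ) ^ (2 * α + 1) := by
    by_contra! hall
    obtain ⟨rfl, rfl, rfl⟩ :=
      identification a₀ a c₀ c α₀ α hc₀ hα₀ fun k hk₁ hk₃ => hall k ⟨hk₁, hk₃⟩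
    exact hne rfl
  refine Finset.sum_pos' (fun _ _ => sq_nonneg _)
    ⟨k, Finset.mem_Icc.mpr ⟨hk₁, hk₃.trans hm⟩, sq_pos_of_ne_zero ?_⟩
  rwa [sub_sub, sub_ne_zero]
end

section
/- Let (Ω, 𝔉, P) be a probability space, m ≥ 1 an integer, Δ > 0, and Θ a nonempty compact subset of ℝ × ℝ × (-1/2, 1/2). Let g₁, …, g_m be real numbers and, for each n, let ĝ_{n,1}, …, ĝ_{n,m} be random variables such that ĝ_{n,k} → g_k in probability as n → ∞ for each k = 1, …, m. Define the random function Q_n(ω, θ) = Σ_{k=1}^m (ĝ_{n,k}(ω) − a − c·(kΔ)^{2α+1})² and the deterministic function Q(θ) = Σ_{k=1}^m (g_k − a − c·(kΔ)^{2α+1})² for θ = (a, c, α) ∈ Θ. Then sup_{θ ∈ Θ} |Q_n(ω, θ) − Q(θ)| → 0 in probability as n → ∞ (the supremum being a well-defined random variable since Q_n(ω, ·) − Q(·) is continuous on the compact set Θ). -/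
/-!
For `θ` in a compact set the residuals `g_k - a - c (kΔ)^(2α+1)` are bounded by some `M`,
and `ĝ_{n,k} - a - c (kΔ)^(2α+1)` differs from them by `ĝ_{n,k} - g_k`, independently of `θ`.
Since `|u² - v²| ≤ |u - v| (|u - v| + 2|v|)`, on the event that all `|ĝ_{n,k} - g_k| ≤ δ` the
supremum is at most `m δ (δ + 2M)`, which is `≤ ε` for small `δ`; the complementary event is a
finite union of events whose probabilities tend to zero.
-/

open MeasureTheory Set Filter Topology

theorem tendsto_measure_iUnion_of_tendsto_zero {α β ι : Type*} [Fintype ι] [MeasurableSpace α]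
    {μ : Measure α} {l : Filter β} {s : β → ι → Set α}
    (h : ∀ i, Tendsto (fun b => μ (s b i)) l (𝓝 0)) :
    Tendsto (fun b => μ (⋃ i, s b i)) l (𝓝 0) := by
  have hsum : Tendsto (fun b => ∑ i, μ (s b i)) l (𝓝 0) := by
    simpa using tendsto_finsetSum Finset.univ fun i _ => h i
  exact tendsto_of_tendsto_of_tendsto_of_le_of_le tendsto_const_nhds hsum
    (fun _ => zero_le) fun b => measure_iUnion_fintype_le μ (s b)

theorem abs_sq_sub_sq_le (u v : ℝ) : |u ^ 2 - v ^ 2| ≤ |u - v| * (|u - v| + 2 * |v|) :=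
  calc |u ^ 2 - v ^ 2| = |u - v| * |(u - v) + 2 * v| := by rw [← abs_mul]; ring_nf
    _ ≤ |u - v| * (|u - v| + 2 * |v|) := by
      gcongr
      exact (abs_add_le _ _).trans_eq (by rw [abs_mul, abs_two])

theorem sSup_abs_sum_sq_sub_sum_sq_le {T ι : Type*} [Fintype ι] (Θ : Set T)
    (r : ι → T → ℝ) (x y : ι → ℝ) {M δ ε : ℝ} (hM : ∀ k, ∀ θ ∈ Θ, |y k - r k θ| ≤ M)
    (hδ : ∀ k, |x k - y k| ≤ δ) (hε : 0 ≤ ε)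
    (hδε : Fintype.card ι * (δ * (δ + 2 * M)) ≤ ε) :
    sSup ((fun θ => |∑ k, (x k - r k θ) ^ 2 - ∑ k, (y k - r k θ) ^ 2|) '' Θ) ≤ ε := by
  refine Real.sSup_le ?_ hε
  rintro _ ⟨θ, hθ, rfl⟩
  have hterm : ∀ k, |(x k - r k θ) ^ 2 - (y k - r k θ) ^ 2| ≤ δ * (δ + 2 * M) := by
    intro k
    have hdiff : (x k - r k θ) - (y k - r k θ) = x k - y k := by ring
    refine (abs_sq_sub_sq_le _ _).trans ?_
    rw [hdiff]
    have hδ0 : 0 ≤ δ := (abs_nonneg _).trans (hδ k)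
    gcongr
    exacts [hδ k, hδ k, hM k θ hθ]
  calc |∑ k, (x k - r k θ) ^ 2 - ∑ k, (y k - r k θ) ^ 2|
      = |∑ k, ((x k - r k θ) ^ 2 - (y k - r k θ) ^ 2)| := by rw [Finset.sum_sub_distrib]
    _ ≤ ∑ k, |(x k - r k θ) ^ 2 - (y k - r k θ) ^ 2| := Finset.abs_sum_le_sum_abs _ _
    _ ≤ ∑ _k : ι, δ * (δ + 2 * M) := Finset.sum_le_sum fun k _ => hterm k
    _ ≤ ε := by simpa using hδε

theorem exists_pos_mul_mul_add_le (A M : ℝ) {ε : ℝ} (hε : 0 < ε) :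
    ∃ δ > 0, A * (δ * (δ + 2 * M)) ≤ ε := by
  have hlim : Tendsto (fun δ : ℝ => A * (δ * (δ + 2 * M))) (𝓝[>] 0) (𝓝 0) := by
    have : Continuous fun δ : ℝ => A * (δ * (δ + 2 * M)) := by fun_prop
    simpa using (this.tendsto 0).mono_left nhdsWithin_le_nhds
  obtain ⟨δ, hδε, hδ⟩ :=
    ((hlim.eventually (gt_mem_nhds hε)).and self_mem_nhdsWithin).exists
  exact ⟨δ, hδ, hδε.le⟩

-- The index `k` stands for the paper's lag `k + 1`.
noncomputable def powerLawModel (Δ : ℝ) (k : ℕ) (θ : ℝ × ℝ × ℝ) : ℝ :=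
  θ.1 + θ.2.1 * (((k : ℝ) + 1) * Δ) ^ (2 * θ.2.2 + 1)

theorem continuous_powerLawModel {Δ : ℝ} (hΔ : 0 < Δ) (k : ℕ) :
    Continuous (powerLawModel Δ k) := by
  have hbase : ((k : ℝ) + 1) * Δ ≠ 0 := by positivity
  unfold powerLawModel
  fun_prop (disch := exact hbase)

theorem nlls_criterion_uniform_convergence_general
    {Ω : Type*} [MeasurableSpace Ω] (P : Measure Ω)
    (m : ℕ) (Δ : ℝ) (hΔ : 0 < Δ)
    (Θ : Set (ℝ × ℝ × ℝ)) (hΘcpt : IsCompact Θ)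
    (gbar : Fin m → ℝ) (ghat : ℕ → Fin m → Ω → ℝ)
    (hconv : ∀ k : Fin m, ∀ ε > (0:ℝ),
      Tendsto (fun n => P {ω | ε < |ghat n k ω - gbar k|}) atTop (nhds 0)) :
    ∀ ε > (0:ℝ),
      Tendsto
        (fun n => P {ω | ε <
          sSup ((fun θ : ℝ × ℝ × ℝ =>
            |(∑ k : Fin m,
                (ghat n k ω - θ.1
                  - θ.2.1 * ((((k : ℕ) : ℝ) + 1) * Δ) ^ (2 * θ.2.2 + 1)) ^ 2)
              - ∑ k : Fin m,
                (gbar k - θ.1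
                  - θ.2.1 * ((((k : ℕ) : ℝ) + 1) * Δ) ^ (2 * θ.2.2 + 1)) ^ 2|) '' Θ)})
        atTop (nhds 0) := by
  intro ε hε
  -- rewrites each residual as `x - powerLawModel Δ k θ`
  simp only [sub_sub]
  obtain ⟨M, hM⟩ := hΘcpt.exists_bound_of_continuousOn
    (f := fun θ (k : Fin m) => gbar k - powerLawModel Δ k θ)
    (continuous_pi fun k : Fin m =>
      continuous_const.sub (continuous_powerLawModel hΔ k)).continuousOn
  obtain ⟨δ, hδ, hδε⟩ := exists_pos_mul_mul_add_le m M hε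
  refine tendsto_of_tendsto_of_tendsto_of_le_of_le tendsto_const_nhds
    (tendsto_measure_iUnion_of_tendsto_zero fun k => hconv k δ hδ) (fun _ => zero_le)
    fun n => measure_mono fun ω hω => ?_
  by_contra hsmall
  simp only [mem_iUnion, mem_ofPred_eq, not_exists, not_lt] at hω hsmall
  exact hω.not_ge (sSup_abs_sum_sq_sub_sum_sq_le Θ (fun (k : Fin m) => powerLawModel Δ k) _ gbar
    (fun k θ hθ => (norm_le_pi_norm _ k).trans (hM θ hθ)) hsmall hε.le (by simpa using hδε))

/-- Uniform convergence in probability of the empirical NLLS criterion: if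
`ĝ_{n,k} → g_k` in probability for each `k = 1, …, m`, then
`sup_{θ ∈ Θ} |Q_n(ω,θ) - Q(θ)| → 0` in probability, where
`Q_n(ω,θ) = Σ_k (ĝ_{n,k}(ω) - a - c (kΔ)^(2α+1))²` and
`Q(θ) = Σ_k (g_k - a - c (kΔ)^(2α+1))²`, `θ = (a, c, α) ∈ Θ` compact. -/
theorem nlls_criterion_uniform_convergence
    {Ω : Type*} [MeasurableSpace Ω] (P : Measure Ω) [IsProbabilityMeasure P]
    (m : ℕ) (hm : 1 ≤ m) (Δ : ℝ) (hΔ : 0 < Δ)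
    (Θ : Set (ℝ × ℝ × ℝ)) (hΘne : Θ.Nonempty) (hΘcpt : IsCompact Θ)
    (hΘsub : ∀ θ ∈ Θ, θ.2.2 ∈ Ioo (-(1:ℝ)/2) (1/2))
    (gbar : Fin m → ℝ) (ghat : ℕ → Fin m → Ω → ℝ)
    (hmeas : ∀ n k, Measurable (ghat n k))
    (hconv : ∀ k : Fin m, ∀ ε > (0:ℝ),
      Tendsto (fun n => P {ω | ε < |ghat n k ω - gbar k|}) atTop (nhds 0)) :
    ∀ ε > (0:ℝ),
      Tendsto
        (fun n => P {ω | ε <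
          sSup ((fun θ : ℝ × ℝ × ℝ =>
            |(∑ k : Fin m,
                (ghat n k ω - θ.1
                  - θ.2.1 * ((((k : ℕ) : ℝ) + 1) * Δ) ^ (2 * θ.2.2 + 1)) ^ 2)
              - ∑ k : Fin m,
                (gbar k - θ.1
                  - θ.2.1 * ((((k : ℕ) : ℝ) + 1) * Δ) ^ (2 * θ.2.2 + 1)) ^ 2|) '' Θ)})
        atTop (nhds 0) :=
  nlls_criterion_uniform_convergence_general P m Δ hΔ Θ hΘcpt gbar ghat hconv
end
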